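/- Let n ≥ 1 and let J : ℝⁿ × ℝ → ℝ be a measurable kernel satisfying: supp J ⊂ ℝⁿ × [0,∞); J ≥ 0; J ∈ L¹(ℝ^{n+1}) with ∬ J = 1; and J has compact support. Let f ∈ L^∞(ℝⁿ), and let u be the unique bounded continuous solution on ℝⁿ × [0,∞) of u(x,t) = ∬ J(x−y, t−s) ū(y,s) dy ds, where ū = f for s < 0 and ū = u for s ≥ 0. Then for every (x,t) ∈ ℝⁿ × [0,∞), (ess) inf f ≤ u(x,t) ≤ (ess) sup f. In particular, if f ≥ 0 then u ≥ 0, so if f is a probability density then u(·,t) is a probability density for every t ≥ 0. -/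
import Mathlib

open MeasureTheory Real

section Aux

variable (n : ℕ)

instance ctrw_instL : (volume : Measure (EuclideanSpace ℝ (Fin n) × ℝ)).IsAddLeftInvariant := by
  rw [Measure.volume_eq_prod]; infer_instance

instance ctrw_instN : (volume : Measure (EuclideanSpace ℝ (Fin n) × ℝ)).IsNegInvariant := by
  constructor
  show Measure.map Neg.neg _ = _
  rw [Measure.volume_eq_prod]
  have h : (Neg.neg : EuclideanSpace ℝ (Fin n) × ℝ → _) = Prod.map Neg.neg Neg.neg := rfl
  rw [h, ← Measure.map_prod_map _ _ measurable_neg measurable_neg,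
      Measure.map_neg_eq_self, Measure.map_neg_eq_self]

theorem ctrw_aux
    (J : EuclideanSpace ℝ (Fin n) × ℝ → ℝ)
    (hJsupp : ∀ p : EuclideanSpace ℝ (Fin n) × ℝ, p.2 < 0 → J p = 0)
    (hJnonneg : ∀ p, 0 ≤ J p)
    (hJmeas : Measurable J)
    (hJint : Integrable J)
    (hJone : ∫ p : EuclideanSpace ℝ (Fin n) × ℝ, J p = 1)
    (f : EuclideanSpace ℝ (Fin n) → ℝ)
    (hfmeas : Measurable f)
    (hfbdd : ∃ M : ℝ, ∀ x, |f x| ≤ M)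
    (u : EuclideanSpace ℝ (Fin n) × ℝ → ℝ)
    (hu_past : ∀ (y : EuclideanSpace ℝ (Fin n)) (s : ℝ), s < 0 → u (y, s) = f y)
    (hu_cont : ContinuousOn u {p : EuclideanSpace ℝ (Fin n) × ℝ | 0 ≤ p.2})
    (hu_bdd : ∃ M : ℝ, ∀ p : EuclideanSpace ℝ (Fin n) × ℝ, 0 ≤ p.2 → |u p| ≤ M)
    (hu_eq : ∀ (x : EuclideanSpace ℝ (Fin n)) (t : ℝ), 0 ≤ t →
      u (x, t) = ∫ q : EuclideanSpace ℝ (Fin n) × ℝ, J (x - q.1, t - q.2) * u q) :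
    ∀ (x : EuclideanSpace ℝ (Fin n)) (t : ℝ), 0 ≤ t →
      u (x, t) ≤ ⨆ y : EuclideanSpace ℝ (Fin n), f y := by
  obtain ⟨Mf, hMf⟩ := hfbdd
  obtain ⟨Mu, hMu⟩ := hu_bdd
  -- global bound for u
  set M0 : ℝ := max Mf Mu with hM0
  have habs : ∀ p : EuclideanSpace ℝ (Fin n) × ℝ, |u p| ≤ M0 := by
    intro p
    rcases lt_or_ge p.2 0 with h | h
    · have : u p = f p.1 := hu_past p.1 p.2 h
      rw [this]
      exact le_trans (hMf p.1) (le_max_left _ _)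
    · exact le_trans (hMu p h) (le_max_right _ _)
  have hM0nn : 0 ≤ M0 := le_trans (abs_nonneg _) (habs (0, 0))
  -- the supremum of f
  have hfba : BddAbove (Set.range f) := by
    refine ⟨Mf, ?_⟩
    rintro _ ⟨y, rfl⟩
    exact (abs_le.1 (hMf y)).2
  set B : ℝ := ⨆ y : EuclideanSpace ℝ (Fin n), f y with hB
  have hfB : ∀ y : EuclideanSpace ℝ (Fin n), f y ≤ B := fun y => le_ciSup hfba y
  -- measurability of u
  have hsmeas : MeasurableSet {p : EuclideanSpace ℝ (Fin n) × ℝ | 0 ≤ p.2} :=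
    measurableSet_le measurable_const measurable_snd
  have h1 : AEMeasurable u (volume.restrict {p : EuclideanSpace ℝ (Fin n) × ℝ | 0 ≤ p.2}) :=
    hu_cont.aemeasurable hsmeas
  have h2 : AEMeasurable u (volume.restrict {p : EuclideanSpace ℝ (Fin n) × ℝ | 0 ≤ p.2}ᶜ) := by
    refine (hfmeas.comp measurable_fst).aemeasurable.congr ?_
    refine (ae_restrict_iff' hsmeas.compl).2 (ae_of_all _ fun p hp => ?_)
    exact (hu_past p.1 p.2 (not_le.1 hp)).symm
  have humeas : AEMeasurable u volume := by
    have := h1.add_measure h2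
    rwa [Measure.restrict_add_restrict_compl hsmeas] at this
  -- the discounted mass κ
  have hJe_int : Integrable (fun p : EuclideanSpace ℝ (Fin n) × ℝ => J p * exp (-p.2)) := by
    refine hJint.mono' ((hJmeas.mul (measurable_snd.neg.exp)).aestronglyMeasurable)
      (ae_of_all _ fun p => ?_)
    rw [Real.norm_eq_abs]
    rcases lt_or_ge p.2 0 with h | h
    · rw [hJsupp p h]; simp [hJnonneg p]
    · rw [abs_of_nonneg (mul_nonneg (hJnonneg p) (exp_pos _).le)]
      exact mul_le_of_le_one_right (hJnonneg p) (exp_le_one_iff.2 (neg_nonpos.2 h))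
  set κ : ℝ := ∫ p : EuclideanSpace ℝ (Fin n) × ℝ, J p * exp (-p.2) with hκ
  have hκnn : 0 ≤ κ :=
    integral_nonneg fun p => mul_nonneg (hJnonneg p) (exp_pos _).le
  have hnull : volume {p : EuclideanSpace ℝ (Fin n) × ℝ | p.2 = 0} = 0 := by
    have h : {p : EuclideanSpace ℝ (Fin n) × ℝ | p.2 = 0} = (Set.univ ×ˢ ({0} : Set ℝ)) := by
      ext ⟨a, b⟩; simp [eq_comm]
    rw [h, Measure.volume_eq_prod, Measure.prod_prod]
    simp
  have hκlt : κ < 1 := by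
    by_contra hc
    push_neg at hc
    have hg : ∀ p : EuclideanSpace ℝ (Fin n) × ℝ, 0 ≤ J p - J p * exp (-p.2) := by
      intro p
      rcases lt_or_ge p.2 0 with h | h
      · rw [hJsupp p h]; simp
      · have he : exp (-p.2) ≤ 1 := exp_le_one_iff.2 (neg_nonpos.2 h)
        nlinarith [hJnonneg p]
    have hint : Integrable (fun p : EuclideanSpace ℝ (Fin n) × ℝ => J p - J p * exp (-p.2)) := hJint.sub hJe_int
    have hZ : ∫ p : EuclideanSpace ℝ (Fin n) × ℝ, (J p - J p * exp (-p.2)) = 1 - κ := by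
      rw [integral_sub hJint hJe_int, hJone]
    have hZ0 : ∫ p : EuclideanSpace ℝ (Fin n) × ℝ, (J p - J p * exp (-p.2)) = 0 :=
      le_antisymm (by rw [hZ]; linarith) (integral_nonneg hg)
    have hae := (integral_eq_zero_iff_of_nonneg hg hint).1 hZ0
    have h0 : ∀ᵐ p : EuclideanSpace ℝ (Fin n) × ℝ, p.2 ≠ 0 := by
      rw [ae_iff]
      simpa using hnull
    have hJae : J =ᵐ[volume] 0 := by
      filter_upwards [hae, h0] with p hp hp2
      simp only [Pi.zero_apply] at hp ⊢
      rcases lt_trichotomy p.2 0 with h | h | h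
      · exact hJsupp p h
      · exact absurd h hp2
      · have he : exp (-p.2) < 1 := exp_lt_one_iff.2 (by linarith)
        nlinarith [hJnonneg p]
    rw [integral_congr_ae hJae] at hJone
    simp at hJone
  -- the weighted supremum W
  haveI hne : Nonempty {p : EuclideanSpace ℝ (Fin n) × ℝ // 0 ≤ p.2} := ⟨⟨(0, 0), le_refl 0⟩⟩
  set F : {p : EuclideanSpace ℝ (Fin n) × ℝ // 0 ≤ p.2} → ℝ :=
    fun p => exp (-(p : EuclideanSpace ℝ (Fin n) × ℝ).2) * max (u (p : EuclideanSpace ℝ (Fin n) × ℝ) - B) 0 with hF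
  have hFbdd : BddAbove (Set.range F) := by
    refine ⟨M0 + |B|, ?_⟩
    rintro _ ⟨p, rfl⟩
    have he1 : exp (-(p : EuclideanSpace ℝ (Fin n) × ℝ).2) ≤ 1 := exp_le_one_iff.2 (neg_nonpos.2 p.2)
    have hm : max (u (p : EuclideanSpace ℝ (Fin n) × ℝ) - B) 0 ≤ M0 + |B| := by
      have h1 := (abs_le.1 (habs (p : EuclideanSpace ℝ (Fin n) × ℝ))).2
      have h2 := neg_abs_le B
      refine max_le (by linarith) (by positivity)
    calc F p ≤ max (u (p : EuclideanSpace ℝ (Fin n) × ℝ) - B) 0 :=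
          mul_le_of_le_one_left (le_max_right _ _) he1
      _ ≤ M0 + |B| := hm
  set W : ℝ := ⨆ p, F p with hW
  have hW0 : 0 ≤ W := by
    have h1 : (0 : ℝ) ≤ F ⟨(0, 0), le_refl 0⟩ :=
      mul_nonneg (exp_pos _).le (le_max_right _ _)
    exact le_trans h1 (le_ciSup hFbdd _)
  -- key estimate
  have key : ∀ (x : EuclideanSpace ℝ (Fin n)) (t : ℝ), 0 ≤ t → u (x, t) - B ≤ κ * W * exp t := by
    intro x t ht
    have hJa : ∀ q : EuclideanSpace ℝ (Fin n) × ℝ, J (x - q.1, t - q.2) = J ((x, t) - q) := fun q => rfl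
    have hInt2 : Integrable (fun q : EuclideanSpace ℝ (Fin n) × ℝ => J ((x, t) - q)) :=
      (integrable_comp_sub_left J ((x, t) : EuclideanSpace ℝ (Fin n) × ℝ)).2 hJint
    have hInt1 : Integrable (fun q : EuclideanSpace ℝ (Fin n) × ℝ => J ((x, t) - q) * u q) := by
      refine (hInt2.const_mul M0).mono'
        (((hJmeas.comp (measurable_const.sub measurable_id)).aemeasurable.mul
          humeas).aestronglyMeasurable) (ae_of_all _ fun q => ?_)
      rw [Real.norm_eq_abs, abs_mul, abs_of_nonneg (hJnonneg _)]
      calc J ((x, t) - q) * |u q| ≤ J ((x, t) - q) * M0 :=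
            mul_le_mul_of_nonneg_left (habs q) (hJnonneg _)
        _ = M0 * J ((x, t) - q) := mul_comm _ _
    have hInt3g : Integrable (fun p : EuclideanSpace ℝ (Fin n) × ℝ => J p * exp (t - p.2)) := by
      refine (hJint.const_mul (exp t)).mono'
        ((hJmeas.mul ((measurable_const.sub measurable_snd).exp)).aestronglyMeasurable)
        (ae_of_all _ fun p => ?_)
      rw [Real.norm_eq_abs]
      rcases lt_or_ge p.2 0 with h | h
      · rw [hJsupp p h]; simp
      · rw [abs_of_nonneg (mul_nonneg (hJnonneg p) (exp_pos _).le)]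
        calc J p * exp (t - p.2) ≤ J p * exp t :=
              mul_le_mul_of_nonneg_left (exp_le_exp.2 (by linarith)) (hJnonneg p)
          _ = exp t * J p := mul_comm _ _
    have hInt3 : Integrable (fun q : EuclideanSpace ℝ (Fin n) × ℝ => J ((x, t) - q) * exp q.2) := by
      have h := (integrable_comp_sub_left (fun p : EuclideanSpace ℝ (Fin n) × ℝ => J p * exp (t - p.2))
        ((x, t) : EuclideanSpace ℝ (Fin n) × ℝ)).2 hInt3g
      have heq : (fun q : EuclideanSpace ℝ (Fin n) × ℝ => J ((x, t) - q) * exp (t - ((x, t) - q).2)) =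
          fun q : EuclideanSpace ℝ (Fin n) × ℝ => J ((x, t) - q) * exp q.2 := by
        funext q
        have : ((x, t) - q).2 = t - q.2 := rfl
        rw [this, sub_sub_cancel]
      rwa [heq] at h
    have hInt1' : Integrable (fun q : EuclideanSpace ℝ (Fin n) × ℝ => J ((x, t) - q) * (u q - B)) := by
      have h := hInt1.sub (hInt2.mul_const B)
      refine h.congr (ae_of_all _ fun q => ?_)
      simp only [Pi.sub_apply]
      ring
    have hIntR : Integrable (fun q : EuclideanSpace ℝ (Fin n) × ℝ => J ((x, t) - q) * (W * exp q.2)) := by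
      have h := hInt3.const_mul W
      have heq : (fun q : EuclideanSpace ℝ (Fin n) × ℝ => W * (J ((x, t) - q) * exp q.2)) =
          fun q : EuclideanSpace ℝ (Fin n) × ℝ => J ((x, t) - q) * (W * exp q.2) := by funext q; ring
      rwa [heq] at h
    have hsum : ∫ q : EuclideanSpace ℝ (Fin n) × ℝ, J ((x, t) - q) = 1 := by
      rw [integral_sub_left_eq_self J volume ((x, t) : EuclideanSpace ℝ (Fin n) × ℝ), hJone]
    have heq1 : u (x, t) - B = ∫ q : EuclideanSpace ℝ (Fin n) × ℝ, J ((x, t) - q) * (u q - B) := by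
      have heq : (fun q : EuclideanSpace ℝ (Fin n) × ℝ => J ((x, t) - q) * (u q - B)) =
          fun q : EuclideanSpace ℝ (Fin n) × ℝ => J ((x, t) - q) * u q - J ((x, t) - q) * B := by funext q; ring
      rw [heq, integral_sub hInt1 (hInt2.mul_const B), integral_mul_const, hsum, one_mul]
      have h := hu_eq x t ht
      simp only [hJa] at h
      rw [← h]
    have hmono : (∫ q : EuclideanSpace ℝ (Fin n) × ℝ, J ((x, t) - q) * (u q - B)) ≤
        ∫ q : EuclideanSpace ℝ (Fin n) × ℝ, J ((x, t) - q) * (W * exp q.2) := by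
      refine integral_mono hInt1' hIntR fun q => ?_
      rcases lt_or_ge q.2 0 with h | h
      · have hu' : u q = f q.1 := hu_past q.1 q.2 h
        have h1 : u q - B ≤ 0 := by rw [hu']; linarith [hfB q.1]
        have h2 : (0 : ℝ) ≤ W * exp q.2 := mul_nonneg hW0 (exp_pos _).le
        calc J ((x, t) - q) * (u q - B) ≤ 0 := mul_nonpos_of_nonneg_of_nonpos (hJnonneg _) h1
          _ ≤ J ((x, t) - q) * (W * exp q.2) := mul_nonneg (hJnonneg _) h2
      · have hle : u q - B ≤ W * exp q.2 := by
          have h1 := le_ciSup hFbdd (⟨q, h⟩ : {p : EuclideanSpace ℝ (Fin n) × ℝ // 0 ≤ p.2})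
          have h2 : exp (-q.2) * exp q.2 = 1 := by rw [← exp_add]; simp
          have h3 := le_max_left (u q - B) (0 : ℝ)
          have h4 : exp (-q.2) * max (u q - B) 0 ≤ W := h1
          nlinarith [exp_pos q.2, exp_pos (-q.2), le_max_right (u q - B) (0 : ℝ)]
        exact mul_le_mul_of_nonneg_left hle (hJnonneg _)
    have hre : (∫ q : EuclideanSpace ℝ (Fin n) × ℝ, J ((x, t) - q) * (W * exp q.2)) = κ * W * exp t := by
      have h1 : (fun q : EuclideanSpace ℝ (Fin n) × ℝ => J ((x, t) - q) * (W * exp q.2)) =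
          fun q : EuclideanSpace ℝ (Fin n) × ℝ => W * ((fun p : EuclideanSpace ℝ (Fin n) × ℝ => J p * exp (t - p.2)) ((x, t) - q)) := by
        funext q
        show J ((x, t) - q) * (W * exp q.2) = W * (J ((x, t) - q) * exp (t - ((x, t) - q).2))
        have : ((x, t) - q).2 = t - q.2 := rfl
        rw [this, sub_sub_cancel]
        ring
      rw [h1, integral_const_mul,
        integral_sub_left_eq_self (fun p : EuclideanSpace ℝ (Fin n) × ℝ => J p * exp (t - p.2)) volume ((x, t) : EuclideanSpace ℝ (Fin n) × ℝ)]
      have h2 : (fun p : EuclideanSpace ℝ (Fin n) × ℝ => J p * exp (t - p.2)) =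
          fun p : EuclideanSpace ℝ (Fin n) × ℝ => exp t * (J p * exp (-p.2)) := by
        funext p
        rw [sub_eq_add_neg, exp_add]
        ring
      rw [h2, integral_const_mul, ← hκ]
      ring
    calc u (x, t) - B = ∫ q : EuclideanSpace ℝ (Fin n) × ℝ, J ((x, t) - q) * (u q - B) := heq1
      _ ≤ ∫ q : EuclideanSpace ℝ (Fin n) × ℝ, J ((x, t) - q) * (W * exp q.2) := hmono
      _ = κ * W * exp t := hre
  -- conclude W = 0
  have hterm : ∀ p : {p : EuclideanSpace ℝ (Fin n) × ℝ // 0 ≤ p.2}, F p ≤ κ * W := by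
    rintro ⟨p, hp⟩
    have hkey : u p - B ≤ κ * W * exp p.2 := key p.1 p.2 hp
    have hκW : 0 ≤ κ * W := mul_nonneg hκnn hW0
    have hm : max (u p - B) 0 ≤ κ * W * exp p.2 :=
      max_le hkey (mul_nonneg hκW (exp_pos _).le)
    have h2 : exp (-p.2) * exp p.2 = 1 := by rw [← exp_add]; simp
    have := mul_le_mul_of_nonneg_left hm (exp_pos (-p.2)).le
    show exp (-p.2) * max (u p - B) 0 ≤ κ * W
    nlinarith [exp_pos p.2, exp_pos (-p.2)]
  have hWle : W ≤ κ * W := ciSup_le hterm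
  have hWeq : W = 0 := le_antisymm (by nlinarith) hW0
  intro x t ht
  have h2 : exp (-t) * max (u (x, t) - B) 0 ≤ 0 := by
    have h1 : F ⟨(x, t), ht⟩ ≤ W := le_ciSup hFbdd _
    rw [hWeq] at h1
    exact h1
  nlinarith [exp_pos (-t), le_max_left (u (x, t) - B) (0 : ℝ),
    le_max_right (u (x, t) - B) (0 : ℝ)]

end Aux

/-- **Comparison principle for the Cauchy-type problem (P).**
Let `J` be a nonnegative, integrable, compactly supported space-time probability
density on `ℝⁿ × ℝ` supported in `{t ≥ 0}`, let `f` be bounded measurable, and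
let `u` be the (unique) bounded continuous solution of `u = J ∗ ū` with past
data `f`. Then `inf f ≤ u(x,t) ≤ sup f` for all `x ∈ ℝⁿ`, `t ≥ 0`; in
particular, if `f ≥ 0` then `u ≥ 0` on `ℝⁿ × [0,∞)`. -/
theorem ctrw_cauchy_problem_inf_sup_bounds
    (n : ℕ) (hn : 1 ≤ n)
    (J : EuclideanSpace ℝ (Fin n) × ℝ → ℝ)
    (hJsupp : ∀ p : EuclideanSpace ℝ (Fin n) × ℝ, p.2 < 0 → J p = 0)
    (hJnonneg : ∀ p, 0 ≤ J p)
    (hJmeas : Measurable J)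
    (hJint : Integrable J)
    (hJone : ∫ p : EuclideanSpace ℝ (Fin n) × ℝ, J p = 1)
    (hJcpt : HasCompactSupport J)
    (f : EuclideanSpace ℝ (Fin n) → ℝ)
    (hfmeas : Measurable f)
    (hfbdd : ∃ M : ℝ, ∀ x, |f x| ≤ M)
    (u : EuclideanSpace ℝ (Fin n) × ℝ → ℝ)
    (hu_past : ∀ (y : EuclideanSpace ℝ (Fin n)) (s : ℝ), s < 0 → u (y, s) = f y)
    (hu_cont : ContinuousOn u {p : EuclideanSpace ℝ (Fin n) × ℝ | 0 ≤ p.2})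
    (hu_bdd : ∃ M : ℝ, ∀ p : EuclideanSpace ℝ (Fin n) × ℝ, 0 ≤ p.2 → |u p| ≤ M)
    (hu_eq : ∀ (x : EuclideanSpace ℝ (Fin n)) (t : ℝ), 0 ≤ t →
      u (x, t) = ∫ q : EuclideanSpace ℝ (Fin n) × ℝ, J (x - q.1, t - q.2) * u q) :
    (∀ (x : EuclideanSpace ℝ (Fin n)) (t : ℝ), 0 ≤ t →
      (⨅ y : EuclideanSpace ℝ (Fin n), f y) ≤ u (x, t) ∧
      u (x, t) ≤ ⨆ y : EuclideanSpace ℝ (Fin n), f y) ∧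
    ((∀ x, 0 ≤ f x) →
      ∀ (x : EuclideanSpace ℝ (Fin n)) (t : ℝ), 0 ≤ t → 0 ≤ u (x, t)) := by
  obtain ⟨Mf, hMf⟩ := hfbdd
  have hupper := ctrw_aux n J hJsupp hJnonneg hJmeas hJint hJone f hfmeas (⟨Mf, hMf⟩ : ∃ M : ℝ, ∀ x, |f x| ≤ M)
    u hu_past hu_cont hu_bdd hu_eq
  have hlow := ctrw_aux n J hJsupp hJnonneg hJmeas hJint hJone (fun y => -f y)
    hfmeas.neg (⟨Mf, fun y => by rw [abs_neg]; exact hMf y⟩ : ∃ M : ℝ, ∀ x, |(fun y => -f y) x| ≤ M)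
    (fun p => -u p) (fun y s hs => by show -u (y, s) = -f y; rw [hu_past y s hs])
    hu_cont.neg
    (hu_bdd.imp fun M h p hp => by rw [abs_neg]; exact h p hp)
    (fun x t ht => by
      simp only [mul_neg, integral_neg]
      rw [hu_eq x t ht])
  have hbb : BddBelow (Set.range f) := by
    refine ⟨-Mf, ?_⟩
    rintro _ ⟨y, rfl⟩
    linarith [(abs_le.1 (hMf y)).1]
  have hmain : ∀ (x : EuclideanSpace ℝ (Fin n)) (t : ℝ), 0 ≤ t →
      (⨅ y : EuclideanSpace ℝ (Fin n), f y) ≤ u (x, t) ∧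
      u (x, t) ≤ ⨆ y : EuclideanSpace ℝ (Fin n), f y := by
    intro x t ht
    refine ⟨?_, hupper x t ht⟩
    have h1 : -u (x, t) ≤ ⨆ y : EuclideanSpace ℝ (Fin n), -f y := hlow x t ht
    have h2 : (⨆ y : EuclideanSpace ℝ (Fin n), -f y) ≤ -⨅ y : EuclideanSpace ℝ (Fin n), f y := by
      refine ciSup_le fun y => ?_
      linarith [ciInf_le hbb y]
    linarith
  exact ⟨hmain, fun hf x t ht => le_trans (le_ciInf hf) (hmain x t ht).1⟩
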